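/- Let 1 < α < 2, t > 0, and p = ( sin(π/(2α)) − √(−cos(π/α)) ) / ( 2 sin(π/(2α)) ), and let f = f_{α,p,t}. Then the second derivative of f at the stationary point x = t √(−cos(π/α)) equals f″( t √(−cos(π/α)) ) = (1/π) · ( 3 cos²(π/(2α)) − 1 ) / ( 2 t³ cos(π/(2α)) sin⁴(π/(2α)) ). -/

import Mathlib

open Real Filter Topology

/-!
Write `s = sin (π/(2α))`, `c = cos (π/(2α))` and `r = √(-cos (π/α))`. For this `p` the density is
`(t c / π) N(x) / D(x)` with `N(x) = x² - 2 t r x + t²` and `D(x) = x⁴ - 2 t² r² x² + t⁴`. Both `N`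
and `D` are stationary at `x₀ = t r`, so there `(N / D)'' = (N'' D - N D'') / D²`. Since
`1 - r² = 2 c²` and `1 + r² = 2 s²`, this becomes the stated value.
-/

noncomputable def cauchyMixDensity (α p t x : ℝ) : ℝ :=
  (t * Real.cos (π / (2 * α)) / π) *
    ((x ^ 2 + t ^ 2 + 2 * (2 * p - 1) * x * t * Real.sin (π / (2 * α))) /
      (x ^ 4 + t ^ 4 + 2 * x ^ 2 * t ^ 2 * Real.cos (π / α)))

theorem deriv_deriv_div_of_deriv_eq_zero {g h g' h' : ℝ → ℝ} {x₀ g'' h'' : ℝ}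
    (hg : ∀ᶠ x in 𝓝 x₀, HasDerivAt g (g' x) x)
    (hh : ∀ᶠ x in 𝓝 x₀, HasDerivAt h (h' x) x)
    (hg' : HasDerivAt g' g'' x₀) (hh' : HasDerivAt h' h'' x₀)
    (hg'₀ : g' x₀ = 0) (hh'₀ : h' x₀ = 0) (hh₀ : h x₀ ≠ 0) :
    deriv (deriv fun x => g x / h x) x₀ = (g'' * h x₀ - g x₀ * h'') / h x₀ ^ 2 := by
  have hne : ∀ᶠ x in 𝓝 x₀, h x ≠ 0 := hh.self_of_nhds.continuousAt.eventually_ne hh₀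
  have hderiv : deriv (fun x => g x / h x) =ᶠ[𝓝 x₀]
      fun x => (g' x * h x - g x * h' x) / h x ^ 2 := by
    filter_upwards [hg, hh, hne] with x hgx hhx hx
    exact (hgx.div hhx hx).deriv
  rw [hderiv.deriv_eq, (((hg'.fun_mul hh.self_of_nhds).fun_sub
    (hg.self_of_nhds.fun_mul hh')).fun_div (hh.self_of_nhds.fun_pow 2) (pow_ne_zero 2 hh₀)).deriv,
    hg'₀, hh'₀]
  field_simp
  ring

theorem deriv_deriv_quadratic_div_quartic_at_stationary (k t u : ℝ) (htu : t ^ 2 ≠ u ^ 2) :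
    deriv (deriv fun x => k * (x ^ 2 - 2 * u * x + t ^ 2) /
        (x ^ 4 - 2 * u ^ 2 * x ^ 2 + t ^ 4)) u =
      2 * k * (t ^ 2 - 3 * u ^ 2) / ((t ^ 2 - u ^ 2) * (t ^ 2 + u ^ 2) ^ 2) := by
  have hN (x : ℝ) :
      HasDerivAt (fun x => k * (x ^ 2 - 2 * u * x + t ^ 2)) (k * (2 * x - 2 * u)) x :=
    ((((hasDerivAt_pow 2 x).sub ((hasDerivAt_id' x).const_mul (2 * u))).add_const
      (t ^ 2)).const_mul k).congr_deriv (by norm_num)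
  have hD (x : ℝ) : HasDerivAt (fun x => x ^ 4 - 2 * u ^ 2 * x ^ 2 + t ^ 4)
      (4 * x ^ 3 - 4 * u ^ 2 * x) x :=
    (((hasDerivAt_pow 4 x).sub ((hasDerivAt_pow 2 x).const_mul (2 * u ^ 2))).add_const
      (t ^ 4)).congr_deriv (by norm_num; ring)
  have hN' : HasDerivAt (fun x => k * (2 * x - 2 * u)) (2 * k) u :=
    ((((hasDerivAt_id' u).const_mul 2).sub_const (2 * u)).const_mul k).congr_deriv (by ring)
  have hD' : HasDerivAt (fun x => 4 * x ^ 3 - 4 * u ^ 2 * x) (8 * u ^ 2) u :=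
    (((hasDerivAt_pow 3 u).const_mul 4).sub ((hasDerivAt_id' u).const_mul
      (4 * u ^ 2))).congr_deriv (by norm_num; ring)
  have h₁ : t ^ 2 - u ^ 2 ≠ 0 := sub_ne_zero.mpr htu
  have h₂ : t ^ 2 + u ^ 2 ≠ 0 := by
    intro h; apply htu; nlinarith [sq_nonneg t, sq_nonneg u]
  have hDu : u ^ 4 - 2 * u ^ 2 * u ^ 2 + t ^ 4 = (t ^ 2 - u ^ 2) * (t ^ 2 + u ^ 2) := by ring
  rw [deriv_deriv_div_of_deriv_eq_zero (.of_forall hN) (.of_forall hD) hN' hD' (by ring)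
    (by ring) (hDu ▸ mul_ne_zero h₁ h₂), hDu]
  field_simp
  ring

theorem pi_div_two_mul_mem_Ioo {α : ℝ} (h1 : 1 < α) (h2 : α < 2) :
    π / (2 * α) ∈ Set.Ioo (π / 4) (π / 2) := by
  constructor <;> rw [div_lt_div_iff₀ (by positivity) (by positivity)] <;> nlinarith [pi_pos]

theorem cauchyMixDensity_eq_div_of_cos_eq_neg_sq {α t r : ℝ} (hs : sin (π / (2 * α)) ≠ 0)
    (hr : cos (π / α) = -r ^ 2) :
    cauchyMixDensity α ((sin (π / (2 * α)) - r) / (2 * sin (π / (2 * α)))) t = fun x =>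
      t * cos (π / (2 * α)) / π * (x ^ 2 - 2 * (t * r) * x + t ^ 2) /
        (x ^ 4 - 2 * (t * r) ^ 2 * x ^ 2 + t ^ 4) := by
  funext x
  rw [cauchyMixDensity, hr]
  field_simp
  ring

/-- For `1 < α < 2`, `t > 0` and
`p = (sin(π/(2α)) − √(−cos(π/α)))/(2 sin(π/(2α)))`, the second derivative of
`f = f_{α,p,t}` at the stationary point `x = t √(−cos(π/α))` equals
`(1/π)(3 cos²(π/(2α)) − 1)/(2 t³ cos(π/(2α)) sin⁴(π/(2α)))`. -/
theorem cauchyMix_second_deriv_at_stationary (α t : ℝ) (hα1 : 1 < α)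
    (hα2 : α < 2) (ht : 0 < t) :
    deriv (deriv (cauchyMixDensity α
        ((Real.sin (π / (2 * α)) - Real.sqrt (-Real.cos (π / α))) /
          (2 * Real.sin (π / (2 * α)))) t))
      (t * Real.sqrt (-Real.cos (π / α))) =
    (1 / π) * (3 * Real.cos (π / (2 * α)) ^ 2 - 1) /
      (2 * t ^ 3 * Real.cos (π / (2 * α)) * Real.sin (π / (2 * α)) ^ 4) := by
  obtain ⟨hθ₁, hθ₂⟩ := pi_div_two_mul_mem_Ioo hα1 hα2
  have hs : 0 < sin (π / (2 * α)) := sin_pos_of_pos_of_lt_pi (by linarith [pi_pos]) (by linarith)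
  have hc : 0 < cos (π / (2 * α)) := cos_pos_of_mem_Ioo ⟨by linarith [pi_pos], hθ₂⟩
  have hθ : π / α = 2 * (π / (2 * α)) := by field_simp
  have hcos : cos (π / α) ≤ 0 :=
    hθ ▸ cos_nonpos_of_pi_div_two_le_of_le (by linarith) (by linarith [pi_pos])
  have hr : cos (π / α) = -sqrt (-cos (π / α)) ^ 2 := by
    rw [sq_sqrt (neg_nonneg.mpr hcos), neg_neg]
  rw [cauchyMixDensity_eq_div_of_cos_eq_neg_sq hs.ne' hr]
  set s := sin (π / (2 * α))
  set c := cos (π / (2 * α))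
  set r := sqrt (-cos (π / α))
  have hcs : cos (π / α) = c ^ 2 - s ^ 2 := by rw [hθ, cos_two_mul']
  have hpy : s ^ 2 + c ^ 2 = 1 := sin_sq_add_cos_sq _
  have hminus : t ^ 2 - (t * r) ^ 2 = 2 * t ^ 2 * c ^ 2 := by
    linear_combination t ^ 2 * (hcs - hr - hpy)
  have hplus : t ^ 2 + (t * r) ^ 2 = 2 * t ^ 2 * s ^ 2 := by
    linear_combination t ^ 2 * (hr - hcs - hpy)
  have hnum : t ^ 2 - 3 * (t * r) ^ 2 = 2 * t ^ 2 * (3 * c ^ 2 - 1) := by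
    linear_combination 3 * t ^ 2 * (hcs - hr - hpy)
  rw [deriv_deriv_quadratic_div_quartic_at_stationary _ _ _
    (sub_ne_zero.mp (hminus ▸ by positivity)), hminus, hplus, hnum]
  field_simp
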